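/- Let n, k be integers with n ≥ 1, k ≥ 0, and let c₁' > 0 satisfy c₁' ≥ 2K c^{1/2} 2^{−k} R. Let Δ be a closed interval centered at a point x₁ with length |Δ| = 2K c^{1/2} / H, where H := c^{−1/2} V max{|A|^{1/i}, |B|^{1/j}} and V := min_{x∈Δ} |F'_L(x)|, attained at x₀ ∈ Δ; suppose |F_L(x₁)| ≤ c / max{|A|^{1/i}, |B|^{1/j}}, that 2^k R^{n−1} ≤ H < 2^{k+1} R^{n−1}, and that V ≤ 8 C₀ |J| max{|A|,|B|}, where J ⊆ I is an interval of length |J| = c₁' R^{−n} with Δ ∩ J ≠ ∅. Then for every x ∈ J one has |F'_L(x)| ≤ 10 C₀ |J| max{|A|,|B|} and |F_L(x)| ≤ 30 C₀ |J|² max{|A|,|B|}. -/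

import Mathlib

/-- `max{|A|^(1/i), |B|^(1/j)}`. -/
noncomputable def Mnum (i j : ℝ) (A B : ℤ) : ℝ :=
  max (|(A : ℝ)| ^ ((1 : ℝ) / i)) (|(B : ℝ)| ^ ((1 : ℝ) / j))

/-- `F_L(x) = Ax − B f(x) + C`. -/
noncomputable def FL (A B C : ℤ) (f : ℝ → ℝ) (x : ℝ) : ℝ :=
  (A : ℝ) * x - (B : ℝ) * f x + (C : ℝ)

/-! Since `|Δ| ≤ |J|` and the two intervals meet, both lie in a convex part of `I` of diameter
`2|J|`. There `|F_L'|` exceeds its value `V ≤ 8C₀|J|max{|A|,|B|}` at `x₀` by at most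
`2|J| · C₀max{|A|,|B|}`, because `F_L'' = -Bf''`; and `|F_L|` exceeds
`|F_L(x₁)| ≤ c/max{|A|^(1/i),|B|^(1/j)} = V√c/H ≤ V|J|/2` by at most
`2|J| · 10C₀|J|max{|A|,|B|}`. -/

open Set Metric

theorem abs_le_add_mul_of_hasDerivWithinAt {s : Set ℝ} (hs : Convex ℝ s) {g g' : ℝ → ℝ}
    {L m d x₀ : ℝ} (hg : ∀ x ∈ s, HasDerivWithinAt g (g' x) s x) (hg' : ∀ x ∈ s, |g' x| ≤ L)
    (hx₀ : x₀ ∈ s) (hm : |g x₀| ≤ m) (hd : ∀ x ∈ s, |x - x₀| ≤ d) :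
    ∀ x ∈ s, |g x| ≤ m + L * d := by
  intro x hx
  have hL : 0 ≤ L := (abs_nonneg _).trans (hg' x₀ hx₀)
  have hlip : |g x - g x₀| ≤ L * |x - x₀| := by
    simpa only [Real.norm_eq_abs] using
      hs.norm_image_sub_le_of_norm_hasDerivWithin_le hg hg' hx₀ hx
  calc |g x| ≤ |g x₀| + |g x - g x₀| := by linarith [abs_sub_abs_le_abs_sub (g x) (g x₀)]
    _ ≤ m + L * d := add_le_add hm (hlip.trans (mul_le_mul_of_nonneg_left (hd x hx) hL))

theorem div_le_mul_rpow_neg {x c₁ H R k n : ℝ} (hx : 0 ≤ x) (hR : 0 < R)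
    (hc₁ : x * 2 ^ (-k) * R ≤ c₁) (hH : 2 ^ k * R ^ (n - 1) ≤ H) :
    x / H ≤ c₁ * R ^ (-n) := by
  have hP : 0 < (2 : ℝ) ^ k * R ^ (n - 1) := by positivity
  calc x / H ≤ x / (2 ^ k * R ^ (n - 1)) := div_le_div_of_nonneg_left hx hP hH
    _ = x * 2 ^ (-k) * R * R ^ (-n) := by
      rw [Real.rpow_neg zero_le_two, Real.rpow_sub hR, Real.rpow_one, Real.rpow_neg hR.le]
      field_simp
    _ ≤ c₁ * R ^ (-n) := by gcongr

theorem div_eq_mul_sqrt_div_of_eq_mul_div_sqrt {c M V H : ℝ} (hH : H = V * M / √c)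
    (hH₀ : H ≠ 0) : c / M = V * (√c / H) := by
  have hc : 0 < c := Real.sqrt_ne_zero'.mp fun h => hH₀ (by simp [hH, h])
  have hV : V ≠ 0 := fun h => hH₀ (by simp [hH, h])
  have hM : M ≠ 0 := fun h => hH₀ (by simp [hH, h])
  have hsc : √c ≠ 0 := (Real.sqrt_pos.mpr hc).ne'
  rw [hH]
  field_simp
  rw [Real.sq_sqrt hc.le]

theorem hasDerivWithinAt_FL {A B C : ℤ} {f : ℝ → ℝ} {f'x x : ℝ} {s : Set ℝ}
    (hf : HasDerivWithinAt f f'x s x) :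
    HasDerivWithinAt (FL A B C f) ((A : ℝ) - B * f'x) s x := by
  have hlin : HasDerivWithinAt (fun y => (A : ℝ) * y) A s x := by
    simpa using (hasDerivWithinAt_id x s).const_mul (A : ℝ)
  exact (hlin.sub (hf.const_mul _)).add_const _

theorem subset_closedBall_of_mem_Icc {a b z r : ℝ} (hz : z ∈ Icc a b) (hr : b - a ≤ r) :
    Icc a b ⊆ closedBall z r :=
  fun _ hy => (Real.dist_le_of_mem_Icc hy hz).trans hr

theorem exists_convex_subset_of_Icc_inter_nonempty {I : Set ℝ} (hI : I.OrdConnected)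
    {a b u v : ℝ} (hΔI : Icc a b ⊆ I) (hJI : Icc u v ⊆ I) (hmeet : (Icc a b ∩ Icc u v).Nonempty)
    (hlen : b - a ≤ v - u) :
    ∃ W ⊆ I, Convex ℝ W ∧ Icc a b ⊆ W ∧ Icc u v ⊆ W ∧ ∀ p ∈ W, ∀ q ∈ W, |p - q| ≤ 2 * (v - u) := by
  obtain ⟨z, hzΔ, hzJ⟩ := hmeet
  refine ⟨I ∩ closedBall z (v - u), inter_subset_left, hI.convex.inter (convex_closedBall z _),
    subset_inter hΔI (subset_closedBall_of_mem_Icc hzΔ hlen),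
    subset_inter hJI (subset_closedBall_of_mem_Icc hzJ le_rfl), fun p hp q hq => ?_⟩
  rw [← Real.dist_eq]
  linarith [dist_triangle_right p q z, mem_closedBall.mp hp.2, mem_closedBall.mp hq.2]

theorem lemma_vp2_general
    (i j c₀ C₀ c K : ℝ) (R n k : ℕ)
    (hR : 2 ≤ R)
    (hK : 1 ≤ K)
    (I : Set ℝ) (hI : I.OrdConnected)
    (f f' f'' : ℝ → ℝ)
    (hf' : ∀ x ∈ I, HasDerivWithinAt f (f' x) I x)
    (hf'' : ∀ x ∈ I, HasDerivWithinAt f' (f'' x) I x)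
    (hbounds : ∀ x ∈ I, c₀ ≤ |f' x| ∧ |f' x| ≤ C₀ ∧ c₀ ≤ |f'' x| ∧ |f'' x| ≤ C₀)
    (A B C : ℤ)
    (c₁' : ℝ)
    (hc₁1 : 2 * K * Real.sqrt c * (2 : ℝ) ^ (-(k : ℝ)) * (R : ℝ) ≤ c₁')
    (a b V H x₀ : ℝ) (hΔI : Set.Icc a b ⊆ I)
    (hx₀mem : x₀ ∈ Set.Icc a b) (hx₀ : |(A : ℝ) - (B : ℝ) * f' x₀| = V)
    (hH : H = V * Mnum i j A B / Real.sqrt c)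
    (hlen : b - a = 2 * K * Real.sqrt c / H)
    (hF₁ : |FL A B C f ((a + b) / 2)| ≤ c / Mnum i j A B)
    (hHlow : (2 : ℝ) ^ (k : ℝ) * (R : ℝ) ^ ((n : ℝ) - 1) ≤ H)
    (u v : ℝ) (hJlen : v - u = c₁' * (R : ℝ) ^ (-(n : ℝ)))
    (hJI : Set.Icc u v ⊆ I)
    (hmeet : (Set.Icc a b ∩ Set.Icc u v).Nonempty)
    (hVsmall : V ≤ 8 * C₀ * (v - u) * max |(A : ℝ)| |(B : ℝ)|) :
    ∀ x ∈ Set.Icc u v,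
      |(A : ℝ) - (B : ℝ) * f' x| ≤ 10 * C₀ * (v - u) * max |(A : ℝ)| |(B : ℝ)| ∧
      |FL A B C f x| ≤ 30 * C₀ * (v - u) ^ 2 * max |(A : ℝ)| |(B : ℝ)| := by
  set N := max |(A : ℝ)| |(B : ℝ)|
  have hRpos : (0 : ℝ) < R := by positivity
  have hHpos : 0 < H := lt_of_lt_of_le (by positivity) hHlow
  have hΔJ : 2 * K * √c / H ≤ v - u := hJlen ▸ div_le_mul_rpow_neg (by positivity) hRpos hc₁1 hHlow
  have hJpos : 0 ≤ v - u := le_trans (by positivity) hΔJ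
  have hVnonneg : 0 ≤ V := hx₀ ▸ abs_nonneg _
  have hcM : c / Mnum i j A B ≤ 4 * C₀ * (v - u) ^ 2 * N := by
    have hsc : √c / H ≤ (v - u) / 2 := by
      have : √c / H ≤ K * (√c / H) := le_mul_of_one_le_left (by positivity) hK
      linarith [mul_div_assoc (2 * K) √c H]
    calc c / Mnum i j A B = V * (√c / H) := div_eq_mul_sqrt_div_of_eq_mul_div_sqrt hH hHpos.ne'
      _ ≤ V * ((v - u) / 2) := mul_le_mul_of_nonneg_left hsc hVnonneg
      _ ≤ 8 * C₀ * (v - u) * N * ((v - u) / 2) := by gcongr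
      _ = 4 * C₀ * (v - u) ^ 2 * N := by ring
  obtain ⟨W, hWI, hW, hΔW, hJW, hdiam⟩ :=
    exists_convex_subset_of_Icc_inter_nonempty hI hΔI hJI hmeet (hlen ▸ hΔJ)
  have hF' : ∀ x ∈ W, |(A : ℝ) - B * f' x| ≤ V + C₀ * N * (2 * (v - u)) := by
    refine abs_le_add_mul_of_hasDerivWithinAt hW (g' := fun x => -(B * f'' x))
      (fun x hx => (((hf'' x (hWI hx)).mono hWI).const_mul _).const_sub _)
      (fun x hx => ?_) (hΔW hx₀mem) hx₀.le (fun x hx => hdiam x hx x₀ (hΔW hx₀mem))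
    rw [abs_neg, abs_mul, mul_comm C₀]
    exact mul_le_mul (le_max_right _ _) (hbounds x (hWI hx)).2.2.2 (abs_nonneg _)
      ((abs_nonneg _).trans (le_max_left _ _))
  have hF'W : ∀ x ∈ W, |(A : ℝ) - B * f' x| ≤ 10 * C₀ * (v - u) * N := fun x hx => by
    linarith [hF' x hx]
  have hab : a ≤ b := hx₀mem.1.trans hx₀mem.2
  have hmid : (a + b) / 2 ∈ W := hΔW ⟨by linarith, by linarith⟩
  have hF := abs_le_add_mul_of_hasDerivWithinAt hW
    (fun x hx => hasDerivWithinAt_FL ((hf' x (hWI hx)).mono hWI)) hF'W hmid hF₁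
    (fun x hx => hdiam x hx _ hmid)
  have hscale : 0 ≤ C₀ * (v - u) ^ 2 * N := by
    linarith [mul_nonneg (hVnonneg.trans hVsmall) hJpos]
  intro x hx
  exact ⟨hF'W x (hJW hx), by linarith [hF x (hJW hx)]⟩

/-- On any interval `J` of length `c₁'R^(−n)` meeting a Type 1 interval `Δ` whose
minimal derivative satisfies `V ≤ 8C₀|J|max{|A|,|B|}`, one has
`|F_L'(x)| ≤ 10C₀|J|max{|A|,|B|}` and `|F_L(x)| ≤ 30C₀|J|²max{|A|,|B|}` on `J`. -/
theorem lemma_vp2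
    (i j c₀ C₀ c K : ℝ) (R n k : ℕ)
    (hi : 0 < i) (hij : i ≤ j) (hj : j < 1) (hsum : i + j = 1)
    (hc₀ : 0 < c₀) (hC₀ : c₀ ≤ C₀) (hc : 0 < c) (hR : 2 ≤ R)
    (hK : 1 ≤ K) (hn : 1 ≤ n)
    (I : Set ℝ) (hI : I.OrdConnected)
    (f f' f'' : ℝ → ℝ)
    (hf' : ∀ x ∈ I, HasDerivWithinAt f (f' x) I x)
    (hf'' : ∀ x ∈ I, HasDerivWithinAt f' (f'' x) I x)
    (hbounds : ∀ x ∈ I, c₀ ≤ |f' x| ∧ |f' x| ≤ C₀ ∧ c₀ ≤ |f'' x| ∧ |f'' x| ≤ C₀)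
    (A B C : ℤ) (hAB : ¬(A = 0 ∧ B = 0))
    (c₁' : ℝ) (hc₁pos : 0 < c₁')
    (hc₁1 : 2 * K * Real.sqrt c * (2 : ℝ) ^ (-(k : ℝ)) * (R : ℝ) ≤ c₁')
    (a b V H x₀ : ℝ) (hab : a ≤ b) (hΔI : Set.Icc a b ⊆ I)
    (hV : IsLeast ((fun x => |(A : ℝ) - (B : ℝ) * f' x|) '' Set.Icc a b) V)
    (hx₀mem : x₀ ∈ Set.Icc a b) (hx₀ : |(A : ℝ) - (B : ℝ) * f' x₀| = V)
    (hH : H = V * Mnum i j A B / Real.sqrt c)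
    (hlen : b - a = 2 * K * Real.sqrt c / H)
    (hF₁ : |FL A B C f ((a + b) / 2)| ≤ c / Mnum i j A B)
    (hHlow : (2 : ℝ) ^ (k : ℝ) * (R : ℝ) ^ ((n : ℝ) - 1) ≤ H)
    (hHup : H < (2 : ℝ) ^ ((k : ℝ) + 1) * (R : ℝ) ^ ((n : ℝ) - 1))
    (u v : ℝ) (hJlen : v - u = c₁' * (R : ℝ) ^ (-(n : ℝ)))
    (hJI : Set.Icc u v ⊆ I)
    (hmeet : (Set.Icc a b ∩ Set.Icc u v).Nonempty)
    (hVsmall : V ≤ 8 * C₀ * (v - u) * max |(A : ℝ)| |(B : ℝ)|) :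
    ∀ x ∈ Set.Icc u v,
      |(A : ℝ) - (B : ℝ) * f' x| ≤ 10 * C₀ * (v - u) * max |(A : ℝ)| |(B : ℝ)| ∧
      |FL A B C f x| ≤ 30 * C₀ * (v - u) ^ 2 * max |(A : ℝ)| |(B : ℝ)| :=
  lemma_vp2_general i j c₀ C₀ c K R n k hR hK I hI f f' f'' hf' hf'' hbounds A B C c₁' hc₁1 a b V H
    x₀ hΔI hx₀mem hx₀ hH hlen hF₁ hHlow u v hJlen hJI hmeet hVsmall
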